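/- Let n ≥ 3 and let f : Fin n → Fin n be a uniformly random function, and let b₁, b₂, b₃ be three fixed pairwise distinct bins. Then the probability that bin b₁ receives no ball, bin b₂ receives at most one ball, and bin b₃ receives at most two balls tends to 5/e³ as n → ∞. -/

import Mathlib

open Filter

open Finset

lemma count_fix {α β : Type*} [Fintype α] [Fintype β] [DecidableEq α] [DecidableEq β]
    (P : Finset α) (a : α → β) (B : Finset β) :
    (Finset.univ.filter (fun f : α → β =>
      (∀ x ∈ P, f x = a x) ∧ ∀ x ∉ P, f x ∉ B)).card
      = (Fintype.card β - B.card) ^ (Fintype.card α - P.card) := by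
  rw [← Fintype.card_subtype]
  have e : {f : α → β // (∀ x ∈ P, f x = a x) ∧ ∀ x ∉ P, f x ∉ B} ≃
      (↥(Pᶜ : Finset α) → ↥(Bᶜ : Finset β)) := {
    toFun := fun f x => ⟨f.1 x.1, Finset.mem_compl.mpr (f.2.2 x.1 (Finset.mem_compl.mp x.2))⟩
    invFun := fun g => ⟨fun x => if h : x ∈ P then a x
        else (g ⟨x, Finset.mem_compl.mpr h⟩).1, by
      constructor
      · intro x hx; simp [hx]
      · intro x hx
        simp only [dif_neg hx]
        exact Finset.mem_compl.mp (g ⟨x, Finset.mem_compl.mpr hx⟩).2⟩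
    left_inv := fun f => by
      ext x
      by_cases h : x ∈ P
      · simp [h, f.2.1 x h]
      · simp [h]
    right_inv := fun g => by
      ext x
      have hx : ¬ (x.1 ∈ P) := Finset.mem_compl.mp x.2
      simp [hx] }
  rw [Fintype.card_congr e, Fintype.card_fun]
  simp [Finset.card_compl]


lemma sum_subsets_le {α : Type*} [Fintype α] [DecidableEq α] (s : Finset α) (k : ℕ) (g : ℕ → ℕ) :
    ∑ T ∈ Finset.univ.filter (fun T : Finset α => T ⊆ s ∧ T.card ≤ k), g T.card
      = ∑ j ∈ Finset.range (k+1), s.card.choose j * g j := by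
  have h : Finset.univ.filter (fun T : Finset α => T ⊆ s ∧ T.card ≤ k)
      = (Finset.range (k+1)).biUnion (fun j => Finset.powersetCard j s) := by
    ext T
    simp only [Finset.mem_filter, Finset.mem_univ, true_and, Finset.mem_biUnion,
      Finset.mem_range, Finset.mem_powersetCard, Nat.lt_succ_iff]
    constructor
    · rintro ⟨h1, h2⟩; exact ⟨T.card, h2, h1, rfl⟩
    · rintro ⟨j, hj, h1, rfl⟩; exact ⟨h1, hj⟩
  rw [h, Finset.sum_biUnion]
  · refine Finset.sum_congr rfl fun j _ => ?_
    rw [Finset.sum_congr rfl (fun T hT => by rw [(Finset.mem_powersetCard.mp hT).2]),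
      Finset.sum_const, smul_eq_mul, Finset.card_powersetCard]
  · intro i _ j _ hij
    rw [Function.onFun, Finset.disjoint_left]
    intro T hi hj
    exact hij ((Finset.mem_powersetCard.mp hi).2.symm.trans (Finset.mem_powersetCard.mp hj).2)


lemma subset_compl_iff_disj {α : Type*} [Fintype α] [DecidableEq α] (S T : Finset α) :
    T ⊆ Sᶜ ↔ Disjoint S T := by
  constructor
  · intro h
    rw [Finset.disjoint_right]
    intro x hxT hxS
    exact Finset.mem_compl.mp (h hxT) hxS
  · intro h x hxT
    exact Finset.mem_compl.mpr (Finset.disjoint_right.mp h hxT)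

lemma count_main (n : ℕ) (b₁ b₂ b₃ : Fin n) (h12 : b₁ ≠ b₂) (h13 : b₁ ≠ b₃) (h23 : b₂ ≠ b₃) :
    (Finset.univ.filter (fun f : Fin n → Fin n =>
      (Finset.univ.filter (fun j => f j = b₁)).card = 0 ∧
      (Finset.univ.filter (fun j => f j = b₂)).card ≤ 1 ∧
      (Finset.univ.filter (fun j => f j = b₃)).card ≤ 2)).card
    = ∑ i ∈ Finset.range 2, n.choose i *
        ∑ j ∈ Finset.range 3, (n-i).choose j * (n-3)^(n-(i+j)) := by
  set φ : (Fin n → Fin n) → Finset (Fin n) × Finset (Fin n) :=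
    fun f => (Finset.univ.filter (fun j => f j = b₂), Finset.univ.filter (fun j => f j = b₃))
    with hφ
  set Q : Finset (Finset (Fin n) × Finset (Fin n)) :=
    Finset.univ.filter (fun p => p.1.card ≤ 1 ∧ p.2.card ≤ 2 ∧ Disjoint p.1 p.2) with hQ
  set A := Finset.univ.filter (fun f : Fin n → Fin n =>
      (Finset.univ.filter (fun j => f j = b₁)).card = 0 ∧
      (Finset.univ.filter (fun j => f j = b₂)).card ≤ 1 ∧
      (Finset.univ.filter (fun j => f j = b₃)).card ≤ 2) with hA
  have hmap : ∀ f ∈ A, φ f ∈ Q := by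
    intro f hf
    rw [hA, Finset.mem_filter] at hf
    rw [hQ, Finset.mem_filter]
    refine ⟨Finset.mem_univ _, hf.2.2.1, hf.2.2.2, ?_⟩
    rw [Finset.disjoint_left]
    intro j hj2 hj3
    rw [Finset.mem_filter] at hj2 hj3
    exact h23 (hj2.2.symm.trans hj3.2)
  rw [Finset.card_eq_sum_card_fiberwise hmap]
  -- fiber cardinality
  have hfiber : ∀ p ∈ Q, (A.filter (fun f => φ f = p)).card
      = (n-3)^(n - (p.1.card + p.2.card)) := by
    intro p hp
    rw [hQ, Finset.mem_filter] at hp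
    obtain ⟨-, hS, hT, hd⟩ := hp
    have hset : A.filter (fun f => φ f = p)
        = Finset.univ.filter (fun f : Fin n → Fin n =>
            (∀ x ∈ p.1 ∪ p.2, f x = if x ∈ p.1 then b₂ else b₃) ∧
            ∀ x ∉ p.1 ∪ p.2, f x ∉ ({b₁, b₂, b₃} : Finset (Fin n))) := by
      rw [hA, Finset.filter_filter]
      ext f
      simp only [Finset.mem_filter, Finset.mem_univ, true_and, hφ, Prod.ext_iff,
        Finset.mem_union, Finset.mem_insert, Finset.mem_singleton]
      constructor
      · rintro ⟨⟨h1, h2, h3⟩, hp2, hp3⟩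
        have hne1 : ∀ x, f x ≠ b₁ := by
          intro x hx
          have : x ∈ Finset.univ.filter (fun j => f j = b₁) := by simp [hx]
          rw [Finset.card_eq_zero.mp h1] at this
          exact absurd this (Finset.notMem_empty x)
        constructor
        · intro x hx
          by_cases hx1 : x ∈ p.1
          · have : x ∈ Finset.univ.filter (fun j => f j = b₂) := by rw [hp2]; exact hx1
            simpa [hx1] using (Finset.mem_filter.mp this).2
          · have hx2 : x ∈ p.2 := hx.resolve_left hx1
            have : x ∈ Finset.univ.filter (fun j => f j = b₃) := by rw [hp3]; exact hx2
            simpa [hx1] using (Finset.mem_filter.mp this).2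
        · intro x hx
          push_neg at hx
          rintro (h | h | h)
          · exact hne1 x h
          · refine hx.1 ?_
            rw [← hp2]; simp [h]
          · refine hx.2 ?_
            rw [← hp3]; simp [h]
      · rintro ⟨hin, hout⟩
        have hp2 : Finset.univ.filter (fun j => f j = b₂) = p.1 := by
          ext x
          simp only [Finset.mem_filter, Finset.mem_univ, true_and]
          constructor
          · intro hfx
            by_contra hx1
            by_cases hx2 : x ∈ p.2
            · have := hin x (Or.inr hx2)
              simp only [hx1, if_false] at this
              exact h23 (hfx.symm.trans this)
            · have := hout x (by rintro (h | h) <;> [exact hx1 h; exact hx2 h])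
              exact this (Or.inr (Or.inl hfx))
          · intro hx1
            have := hin x (Or.inl hx1)
            simpa [hx1] using this
        have hp3 : Finset.univ.filter (fun j => f j = b₃) = p.2 := by
          ext x
          simp only [Finset.mem_filter, Finset.mem_univ, true_and]
          constructor
          · intro hfx
            by_contra hx2
            by_cases hx1 : x ∈ p.1
            · have := hin x (Or.inl hx1)
              simp only [hx1, if_true] at this
              exact h23 (this.symm.trans hfx)
            · have := hout x (by rintro (h | h) <;> [exact hx1 h; exact hx2 h])
              exact this (Or.inr (Or.inr hfx))
          · intro hx2
            have hx1 : x ∉ p.1 := fun hx1 => (Finset.disjoint_left.mp hd hx1) hx2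
            have := hin x (Or.inr hx2)
            simpa [hx1] using this
        have h1 : Finset.univ.filter (fun j => f j = b₁) = ∅ := by
          rw [Finset.filter_eq_empty_iff]
          intro x _
          by_cases hx : x ∈ p.1 ∪ p.2
          · rcases Finset.mem_union.mp hx with hx1 | hx2
            · have := hin x (Or.inl hx1); simp only [hx1, if_true] at this
              rw [this]; exact fun h => h12 h.symm
            · by_cases hx1 : x ∈ p.1
              · have := hin x (Or.inl hx1); simp only [hx1, if_true] at this
                rw [this]; exact fun h => h12 h.symm
              · have := hin x (Or.inr hx2); simp only [hx1, if_false] at this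
                rw [this]; exact fun h => h13 h.symm
          · have := hout x (by simpa [Finset.mem_union] using hx)
            exact fun h => this (Or.inl h)
        refine ⟨⟨by rw [h1]; exact Finset.card_empty, ?_, ?_⟩, hp2, hp3⟩
        · rw [hp2]; exact hS
        · rw [hp3]; exact hT
    have hB : ({b₁, b₂, b₃} : Finset (Fin n)).card = 3 := by
      rw [Finset.card_insert_of_notMem (by simp [h12, h13]),
        Finset.card_insert_of_notMem (by simp [h23]), Finset.card_singleton]
    have hcf := count_fix (p.1 ∪ p.2) (fun x => if x ∈ p.1 then b₂ else b₃)
      ({b₁, b₂, b₃} : Finset (Fin n))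
    rw [hB, Finset.card_union_of_disjoint hd, Fintype.card_fin] at hcf
    rw [hset]
    convert hcf using 2
    exact Finset.filter_congr_decidable .. |>.symm
  rw [Finset.sum_congr rfl hfiber, hQ, Finset.sum_filter, Fintype.sum_prod_type]
  have step1 : ∀ S : Finset (Fin n),
      (∑ T : Finset (Fin n), if S.card ≤ 1 ∧ T.card ≤ 2 ∧ Disjoint S T
          then (n-3)^(n - (S.card + T.card)) else 0)
      = if S.card ≤ 1 then
          ∑ j ∈ Finset.range 3, (n - S.card).choose j * (n-3)^(n - (S.card + j)) else 0 := by
    intro S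
    by_cases hS : S.card ≤ 1
    · simp only [hS, true_and, if_true]
      rw [← Finset.sum_filter]
      have he : Finset.univ.filter (fun T : Finset (Fin n) => T.card ≤ 2 ∧ Disjoint S T)
          = Finset.univ.filter (fun T => T ⊆ Sᶜ ∧ T.card ≤ 2) := by
        ext T
        simp only [Finset.mem_filter, Finset.mem_univ, true_and]
        rw [and_comm, subset_compl_iff_disj]
      rw [he, sum_subsets_le Sᶜ 2 (fun j => (n-3)^(n - (S.card + j)))]
      rw [Finset.card_compl, Fintype.card_fin]
    · simp [hS]
  rw [Finset.sum_congr rfl (fun S _ => step1 S), ← Finset.sum_filter]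
  have he2 : Finset.univ.filter (fun S : Finset (Fin n) => S.card ≤ 1)
      = Finset.univ.filter (fun S => S ⊆ Finset.univ ∧ S.card ≤ 1) := by
    simp
  rw [he2]
  have hfin := sum_subsets_le (Finset.univ : Finset (Fin n)) 1
    (fun i => ∑ j ∈ Finset.range 3, (n-i).choose j * (n-3)^(n-(i+j)))
  rw [Finset.card_univ, Fintype.card_fin] at hfin
  exact hfin

lemma sum_eval (m : ℕ) : (∑ i ∈ Finset.range 2, (m+3).choose i *
        ∑ j ∈ Finset.range 3, (m+3-i).choose j * (m+3-3)^(m+3-(i+j)))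
    = m^(m+3) + (m+3)*m^(m+2) + (m+3).choose 2 * m^(m+1)
      + (m+3)*(m^(m+2) + (m+2)*m^(m+1) + (m+2).choose 2 * m^m) := by
  simp only [Finset.sum_range_succ, Finset.sum_range_zero, Nat.choose_zero_right,
    Nat.choose_one_right, zero_add, Nat.sub_zero,
    show (0:ℕ)+1=1 from rfl, show (0:ℕ)+2=2 from rfl, show (1:ℕ)+1=2 from rfl,
    show (1:ℕ)+2=3 from rfl,
    show m+3-1 = m+2 from by omega, show m+3-2 = m+1 from by omega,
    show m+3-3 = m from by omega]
  ring


noncomputable def qpoly : ℝ → ℝ := fun t =>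
  1 + (1+3*t) + (1+3*t)*(1+2*t)/2 + (1+3*t)*(1 + (1+2*t) + (1+2*t)*(1+t)/2)

lemma qpoly_cont : Continuous qpoly := by unfold qpoly; fun_prop

/-- The probability (over a uniformly random `f : Fin n → Fin n`) that bin
`b₁` receives no ball, bin `b₂` receives at most one ball, and bin `b₃`
receives at most two balls. -/
noncomputable def probEmptyOneTwo (n : ℕ) (b₁ b₂ b₃ : Fin n) : ℝ :=
  ((Finset.univ.filter (fun f : Fin n → Fin n =>
      (Finset.univ.filter (fun j => f j = b₁)).card = 0 ∧
      (Finset.univ.filter (fun j => f j = b₂)).card ≤ 1 ∧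
      (Finset.univ.filter (fun j => f j = b₃)).card ≤ 2)).card : ℝ) / (n : ℝ) ^ n

/-- For `n ≥ 3` balls thrown i.i.d. uniformly into `n` bins and three fixed
pairwise distinct bins `b₁, b₂, b₃`, the probability that `b₁` receives no
ball, `b₂` receives at most one ball and `b₃` receives at most two balls tends
to `5/e³` as `n → ∞` (here `n = m + 3` ranges over all integers `≥ 3`). -/
theorem three_bins_prob_tendsto
    (b₁ b₂ b₃ : (m : ℕ) → Fin (m + 3))
    (h12 : ∀ m, b₁ m ≠ b₂ m) (h13 : ∀ m, b₁ m ≠ b₃ m) (h23 : ∀ m, b₂ m ≠ b₃ m) :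
    Tendsto (fun m : ℕ => probEmptyOneTwo (m + 3) (b₁ m) (b₂ m) (b₃ m))
      atTop (nhds (5 / Real.exp 1 ^ 3)) := by
  have key : ∀ m : ℕ, 1 ≤ m → probEmptyOneTwo (m + 3) (b₁ m) (b₂ m) (b₃ m)
      = ((m:ℝ)/((m:ℝ)+3))^(m+3) * qpoly (1/(m:ℝ)) := by
    intro m hm
    have hm0 : (m:ℝ) ≠ 0 := Nat.cast_ne_zero.mpr (by omega)
    have hm3 : (m:ℝ) + 3 ≠ 0 := by positivity
    rw [probEmptyOneTwo, count_main _ _ _ _ (h12 m) (h13 m) (h23 m), sum_eval]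
    push_cast [Nat.cast_choose_two]
    rw [qpoly, div_pow]
    field_simp
    ring
  have h1 : Filter.Tendsto (fun m : ℕ => ((m:ℝ)/((m:ℝ)+3))^(m+3))
      Filter.atTop (nhds (Real.exp (-3))) := by
    have h := (Real.tendsto_one_add_div_pow_exp (-3)).comp (Filter.tendsto_add_atTop_nat 3)
    refine h.congr (fun m => ?_)
    simp only [Function.comp]
    have h3 : ((m+3 : ℕ):ℝ) = (m:ℝ)+3 := by push_cast; ring
    rw [h3]
    congr 1
    have hm3 : (m:ℝ) + 3 ≠ 0 := by positivity
    field_simp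
    ring
  have h2 : Filter.Tendsto (fun m : ℕ => qpoly (1/(m:ℝ)))
      Filter.atTop (nhds (qpoly 0)) :=
    (qpoly_cont.tendsto 0).comp tendsto_one_div_atTop_nhds_zero_nat
  have hq0 : qpoly 0 = 5 := by norm_num [qpoly]
  have hlim : Real.exp (-3) * qpoly 0 = 5 / Real.exp 1 ^ 3 := by
    rw [hq0, Real.exp_neg]
    have : Real.exp 1 ^ (3:ℕ) = Real.exp 3 := by
      rw [← Real.exp_nat_mul]; norm_num
    rw [this]
    ring
  refine Filter.Tendsto.congr' ?_ (hlim ▸ (h1.mul h2))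
  filter_upwards [Filter.eventually_ge_atTop 1] with m hm
  exact (key m hm).symm
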